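/- arXiv:2311.15255 — 2 statements merged into one kernel-verified Lean document; each statement's English description precedes it below -/
import Mathlib

section
/- Let F be a finite field. Then every maximal independent set of the unitary Cayley graph Γ(M_2(F)) of the ring of 2×2 matrices over F has cardinality exactly |F|². -/
open Pointwise

/-- The unitary Cayley graph of a ring `R`: vertices are elements of `R`,
and `x`, `y` are adjacent iff `x - y` is a unit. -/
def unitaryCayley (R : Type*) [Ring R] : SimpleGraph R where
  Adj x y := x ≠ y ∧ IsUnit (x - y)
  symm := ⟨by
    rintro x y ⟨hne, hu⟩
    exact ⟨hne.symm, by simpa [neg_sub] using hu.neg⟩⟩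
  loopless := ⟨by rintro x ⟨h, -⟩; exact h rfl⟩

/-- A set of vertices is independent if its elements are pairwise nonadjacent. -/
def IsIndepSet {V : Type*} (G : SimpleGraph V) (A : Set V) : Prop :=
  A.Pairwise fun x y => ¬ G.Adj x y

/-- A maximal independent set. -/
def IsMaxIndepSet {V : Type*} (G : SimpleGraph V) (A : Set V) : Prop :=
  IsIndepSet G A ∧ ∀ B : Set V, IsIndepSet G B → A ⊆ B → A = B

/-- A graph is well-covered if all its maximal independent sets have the same cardinality. -/
def WellCovered {V : Type*} (G : SimpleGraph V) : Prop :=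
  ∀ A B : Set V, IsMaxIndepSet G A → IsMaxIndepSet G B → A.ncard = B.ncard

/-- The reduced `k`-diagonal matrix `D_k(a)`:  the `(i, j)` entry is `a (i - k)`
when `j = i + k` (mod `n`) and `i ≠ k`, and `0` otherwise. -/
def Dmat {n : ℕ} (F : Type*) [Field F] (k : Fin n) (a : Fin n → F) :
    Matrix (Fin n) (Fin n) F :=
  Matrix.of fun i j => if i ≠ k ∧ j = i + k then a (i - k) else 0

/-- The family `𝒟` of all reduced diagonal matrices `D_k(a₁, …, a_{n-1})`. -/
def DSet {n : ℕ} (F : Type*) [Field F] : Set (Matrix (Fin n) (Fin n) F) :=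
  {M | ∃ (k : Fin n) (a : Fin n → F), M = Dmat F k a}

/-- The Jacobson radical of a (possibly noncommutative) ring, as a two-sided ideal. -/
noncomputable def jacRad (R : Type*) [Ring R] : TwoSidedIdeal R :=
  (⊥ : TwoSidedIdeal R).jacobson

/-- The quotient of `R` by its Jacobson radical. -/
abbrev JacQuot (R : Type*) [Ring R] := (jacRad R).ringCon.Quotient

/-- The quotient map `R → R/J(R)`. -/
noncomputable def jacMk (R : Type*) [Ring R] : R →+* JacQuot R := (jacRad R).ringCon.mk'

/-!
Translating a maximal independent set `A` of `Γ(M₂(F))` we may assume `0 ∈ A`, so all elements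
of `A` and all their differences are singular. A nonzero singular matrix is a rank-one matrix
`u vᵀ`, and `det (u vᵀ - x yᵀ) = -(u ∧ x) (v ∧ y)`, so two such matrices in `A` share their column
line or their row line. If some `M₁ ∈ A` leaves the row line of `M₀ ∈ A`, then `M₀, M₁` share the
column line `⟨u₀⟩`, and every other element of `A` cannot share row lines with both, so it lies on
`⟨u₀⟩` too. Hence `A` is contained in `{u₀ wᵀ}` or in `{w v₀ᵀ}`; both are independent sets with
`|F|²` elements, so by maximality `A` is one of them.
-/

open Matrix

section Wedge

variable {F : Type*} [Field F]

def wedge (u v : Fin 2 → F) : F := u 0 * v 1 - u 1 * v 0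

theorem wedge_self (u : Fin 2 → F) : wedge u u = 0 := by
  simp only [wedge]; ring

theorem wedge_swap (u v : Fin 2 → F) : wedge v u = -wedge u v := by
  simp only [wedge]; ring

theorem wedge_smul_smul (a b : F) (u : Fin 2 → F) : wedge (a • u) (b • u) = 0 := by
  simp only [wedge, Pi.smul_apply, smul_eq_mul]; ring

theorem exists_eq_smul_of_wedge_eq_zero {u v : Fin 2 → F} (hu : u ≠ 0) (h : wedge u v = 0) :
    ∃ c : F, v = c • u := by
  simp only [wedge] at h
  have hcross : ∀ i j, u i * v j = u j * v i := by
    intro i j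
    fin_cases i <;> fin_cases j <;> simp only [Fin.zero_eta, Fin.mk_one] <;>
      first | linear_combination h | linear_combination -h
  obtain ⟨i, hi⟩ := Function.ne_iff.mp hu
  rw [Pi.zero_apply] at hi
  refine ⟨v i / u i, funext fun j => ?_⟩
  simp only [Pi.smul_apply, smul_eq_mul]
  field_simp
  linear_combination hcross i j

theorem wedge_eq_zero_trans {a u b : Fin 2 → F} (hu : u ≠ 0) (hau : wedge a u = 0)
    (hub : wedge u b = 0) : wedge a b = 0 := by
  obtain ⟨c, rfl⟩ := exists_eq_smul_of_wedge_eq_zero hu (by rw [wedge_swap, hau, neg_zero])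
  obtain ⟨d, rfl⟩ := exists_eq_smul_of_wedge_eq_zero hu hub
  exact wedge_smul_smul c d u

theorem det_fin_two_eq_wedge (M : Matrix (Fin 2) (Fin 2) F) : M.det = wedge (M 0) (M 1) :=
  det_fin_two M

theorem det_vecMulVec_sub_vecMulVec (u v x y : Fin 2 → F) :
    (vecMulVec u v - vecMulVec x y).det = -(wedge u x * wedge v y) := by
  simp only [det_fin_two, Matrix.sub_apply, vecMulVec_apply, wedge]; ring

theorem exists_eq_vecMulVec_of_det_eq_zero {M : Matrix (Fin 2) (Fin 2) F} (hM : M ≠ 0)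
    (h : M.det = 0) : ∃ u v : Fin 2 → F, u ≠ 0 ∧ v ≠ 0 ∧ M = vecMulVec u v := by
  suffices ∃ u v : Fin 2 → F, M = vecMulVec u v by
    obtain ⟨u, v, rfl⟩ := this
    simp only [ne_eq, vecMulVec_eq_zero, not_or] at hM
    exact ⟨u, v, hM.1, hM.2, rfl⟩
  rw [det_fin_two_eq_wedge] at h
  by_cases h0 : M 0 = 0
  · refine ⟨![0, 1], M 1, ?_⟩
    ext i j; fin_cases i <;> simp [vecMulVec_apply, h0]
  · obtain ⟨c, hc⟩ := exists_eq_smul_of_wedge_eq_zero h0 h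
    refine ⟨![1, c], M 0, ?_⟩
    ext i j; fin_cases i <;> simp [vecMulVec_apply, hc]

theorem wedge_eq_zero_or_wedge_eq_zero {u v x y : Fin 2 → F}
    (h : (vecMulVec u v - vecMulVec x y).det = 0) : wedge u x = 0 ∨ wedge v y = 0 := by
  rwa [det_vecMulVec_sub_vecMulVec, neg_eq_zero, mul_eq_zero] at h

end Wedge

section Graph

variable {V W : Type*} {G : SimpleGraph V} {H : SimpleGraph W} {A : Set V}

theorem IsIndepSet.image_iso (e : G ≃g H) (hA : IsIndepSet G A) : IsIndepSet H (e '' A) := by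
  rintro _ ⟨x, hx, rfl⟩ _ ⟨y, hy, rfl⟩ hne hadj
  exact hA hx hy (fun h => hne (congrArg e h)) (e.map_adj_iff.mp hadj)

theorem IsMaxIndepSet.image_iso (e : G ≃g H) (hA : IsMaxIndepSet G A) :
    IsMaxIndepSet H (e '' A) := by
  refine ⟨hA.1.image_iso e, fun B hB hAB => ?_⟩
  have hA_sub : A ⊆ e.symm '' B := by
    intro a ha
    exact ⟨e a, hAB ⟨a, ha, rfl⟩, e.symm_apply_apply a⟩
  rw [hA.2 _ (hB.image_iso e.symm) hA_sub]
  exact e.toEquiv.image_symm_image B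

theorem IsMaxIndepSet.nonempty [Nonempty V] (hA : IsMaxIndepSet G A) : A.Nonempty := by
  rw [Set.nonempty_iff_ne_empty]
  rintro rfl
  obtain ⟨v⟩ := ‹Nonempty V›
  exact Set.singleton_ne_empty v (hA.2 {v} (Set.pairwise_singleton _ _) (Set.empty_subset _)).symm

def unitaryCayleyAddRight {R : Type*} [Ring R] (c : R) : unitaryCayley R ≃g unitaryCayley R where
  toEquiv := Equiv.addRight c
  map_rel_iff' := by simp [unitaryCayley]

theorem isIndepSet_unitaryCayley_matrix_iff {n K : Type*} [Fintype n] [DecidableEq n] [Nonempty n]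
    [Field K] {S : Set (Matrix n n K)} :
    IsIndepSet (unitaryCayley (Matrix n n K)) S ↔ ∀ M ∈ S, ∀ N ∈ S, (M - N).det = 0 := by
  simp only [IsIndepSet, Set.Pairwise, unitaryCayley, isUnit_iff_isUnit_det, isUnit_iff_ne_zero]
  constructor
  · intro h M hM N hN
    rcases eq_or_ne M N with rfl | hne
    · simp
    · simpa [hne] using h hM hN hne
  · intro h M hM N hN _ hadj
    exact hadj.2 (h M hM N hN)

end Graph

section Lines

variable {F : Type*} [Field F]

def colLine (u : Fin 2 → F) : Set (Matrix (Fin 2) (Fin 2) F) := Set.range (vecMulVec u)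

def rowLine (v : Fin 2 → F) : Set (Matrix (Fin 2) (Fin 2) F) := Set.range (vecMulVec · v)

theorem zero_mem_colLine (u : Fin 2 → F) : 0 ∈ colLine u := ⟨0, vecMulVec_zero u⟩

theorem zero_mem_rowLine (v : Fin 2 → F) : 0 ∈ rowLine v := ⟨0, zero_vecMulVec v⟩

theorem vecMulVec_mem_colLine {u x : Fin 2 → F} (hu : u ≠ 0) (h : wedge u x = 0) (y : Fin 2 → F) :
    vecMulVec x y ∈ colLine u := by
  obtain ⟨c, rfl⟩ := exists_eq_smul_of_wedge_eq_zero hu h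
  exact ⟨c • y, by rw [vecMulVec_smul, smul_vecMulVec]⟩

theorem vecMulVec_mem_rowLine {v y : Fin 2 → F} (hv : v ≠ 0) (h : wedge v y = 0) (x : Fin 2 → F) :
    vecMulVec x y ∈ rowLine v := by
  obtain ⟨c, rfl⟩ := exists_eq_smul_of_wedge_eq_zero hv h
  exact ⟨c • x, by simp only [vecMulVec_smul, smul_vecMulVec]⟩

theorem isIndepSet_colLine (u : Fin 2 → F) :
    IsIndepSet (unitaryCayley (Matrix (Fin 2) (Fin 2) F)) (colLine u) := by
  rw [isIndepSet_unitaryCayley_matrix_iff]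
  rintro _ ⟨x, rfl⟩ _ ⟨y, rfl⟩
  rw [det_vecMulVec_sub_vecMulVec, wedge_self, zero_mul, neg_zero]

theorem isIndepSet_rowLine (v : Fin 2 → F) :
    IsIndepSet (unitaryCayley (Matrix (Fin 2) (Fin 2) F)) (rowLine v) := by
  rw [isIndepSet_unitaryCayley_matrix_iff]
  rintro _ ⟨x, rfl⟩ _ ⟨y, rfl⟩
  rw [det_vecMulVec_sub_vecMulVec, wedge_self, mul_zero, neg_zero]

theorem ncard_colLine [Fintype F] {u : Fin 2 → F} (hu : u ≠ 0) :
    (colLine u).ncard = Fintype.card F ^ 2 := by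
  have hinj : Function.Injective (vecMulVec u : (Fin 2 → F) → _) := fun x y hxy => by
    have hdiff : vecMulVec u (x - y) = 0 := by rw [vecMulVec_sub, hxy, sub_self]
    simpa [hu, sub_eq_zero] using hdiff
  rw [colLine, Set.ncard_range_of_injective hinj, Nat.card_eq_fintype_card, Fintype.card_fun,
    Fintype.card_fin]

theorem ncard_rowLine [Fintype F] {v : Fin 2 → F} (hv : v ≠ 0) :
    (rowLine v).ncard = Fintype.card F ^ 2 := by
  have hinj : Function.Injective (vecMulVec · v : (Fin 2 → F) → Matrix (Fin 2) (Fin 2) F) :=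
    fun x y (hxy : vecMulVec x v = vecMulVec y v) => by
      have hdiff : vecMulVec (x - y) v = 0 := by rw [sub_vecMulVec, hxy, sub_self]
      simpa [hv, sub_eq_zero] using hdiff
  rw [rowLine, Set.ncard_range_of_injective hinj, Nat.card_eq_fintype_card, Fintype.card_fun,
    Fintype.card_fin]

theorem subset_colLine_or_subset_rowLine {S : Set (Matrix (Fin 2) (Fin 2) F)}
    (hS : ∀ M ∈ S, ∀ N ∈ S, (M - N).det = 0) (h0 : 0 ∈ S) :
    (∃ u ≠ 0, S ⊆ colLine u) ∨ ∃ v ≠ 0, S ⊆ rowLine v := by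
  have hrankOne : ∀ M ∈ S, M ≠ 0 → ∃ u v, u ≠ 0 ∧ v ≠ 0 ∧ M = vecMulVec u v := fun M hM hM0 =>
    exists_eq_vecMulVec_of_det_eq_zero hM0 (by simpa using hS M hM 0 h0)
  by_cases hS0 : S ⊆ {0}
  · refine Or.inl ⟨Pi.single 0 1, by simp, fun M hM => ?_⟩
    rw [hS0 hM]
    exact zero_mem_colLine _
  obtain ⟨M₀, hM₀, hM₀0⟩ := Set.not_subset.mp hS0
  obtain ⟨u₀, v₀, hu₀, hv₀, rfl⟩ := hrankOne M₀ hM₀ hM₀0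
  by_cases hrow : S ⊆ rowLine v₀
  · exact Or.inr ⟨v₀, hv₀, hrow⟩
  refine Or.inl ⟨u₀, hu₀, fun M hM => ?_⟩
  obtain ⟨M₁, hM₁, hM₁row⟩ := Set.not_subset.mp hrow
  obtain ⟨u₁, v₁, hu₁, -, rfl⟩ := hrankOne M₁ hM₁ fun h => hM₁row (h ▸ zero_mem_rowLine v₀)
  have hv₀₁ : wedge v₀ v₁ ≠ 0 := fun h => hM₁row (vecMulVec_mem_rowLine hv₀ h u₁)
  have hu₀₁ : wedge u₀ u₁ = 0 :=
    (wedge_eq_zero_or_wedge_eq_zero (hS _ hM₀ _ hM₁)).resolve_right hv₀₁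
  rcases eq_or_ne M 0 with rfl | hM0
  · exact zero_mem_colLine u₀
  obtain ⟨u, v, -, hv, rfl⟩ := hrankOne M hM hM0
  refine vecMulVec_mem_colLine hu₀ ?_ v
  rcases wedge_eq_zero_or_wedge_eq_zero (hS _ hM₀ _ hM) with hu₀u | hv₀v
  · exact hu₀u
  rcases wedge_eq_zero_or_wedge_eq_zero (hS _ hM₁ _ hM) with hu₁u | hv₁v
  · exact wedge_eq_zero_trans hu₁ hu₀₁ hu₁u
  · exact absurd (wedge_eq_zero_trans hv hv₀v (by rw [wedge_swap, hv₁v, neg_zero])) hv₀₁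

end Lines

theorem stmt1 (F : Type*) [Field F] [Fintype F]
    (A : Set (Matrix (Fin 2) (Fin 2) F))
    (hA : IsMaxIndepSet (unitaryCayley (Matrix (Fin 2) (Fin 2) F)) A) :
    A.ncard = Fintype.card F ^ 2 := by
  obtain ⟨a, ha⟩ := hA.nonempty
  let e := unitaryCayleyAddRight (-a)
  have hB := hA.image_iso e
  have h0 : 0 ∈ e '' A := ⟨a, ha, add_neg_cancel a⟩
  rw [← Set.ncard_image_of_injective A e.injective]
  rcases subset_colLine_or_subset_rowLine (isIndepSet_unitaryCayley_matrix_iff.mp hB.1) h0 with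
    ⟨u, hu, hsub⟩ | ⟨v, hv, hsub⟩
  · rw [hB.2 _ (isIndepSet_colLine u) hsub, ncard_colLine hu]
  · rw [hB.2 _ (isIndepSet_rowLine v) hsub, ncard_rowLine hv]
end

section
/- Let R be a finite ring with identity and J(R) its Jacobson radical. If A and B are maximal independent sets of the unitary Cayley graph Γ(R), then the cardinality of A ∩ B is a multiple of |J(R)|. -/
open Pointwise

/-!
Since `u + j` is a unit whenever `u` is a unit and `j ∈ J(R)`, translating by an element of `J(R)`
does not change adjacency in `Γ(R)`; so a maximal independent set is closed under adding `J(R)`,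
i.e. it is a union of cosets of `J(R)`. Hence so is `A ∩ B`, and its cardinality is a multiple
of `|J(R)|`.
-/

theorem IsMaxIndepSet.mem_of_forall_not_adj {V : Type*} {G : SimpleGraph V} {A : Set V}
    (hA : IsMaxIndepSet G A) {v : V} (hv : ∀ a ∈ A, ¬ G.Adj v a) : v ∈ A := by
  have hindep : IsIndepSet G (insert v A) :=
    hA.1.insert fun a ha _ => ⟨hv a ha, fun h => hv a ha h.symm⟩
  exact (hA.2 _ hindep (Set.subset_insert v A)) ▸ Set.mem_insert v A

theorem exists_mul_one_add_eq_one_of_mem_jacRad {R : Type*} [Ring R] {x : R}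
    (hx : x ∈ jacRad R) : ∃ z, z * (1 + x) = 1 := by
  obtain ⟨z, hz⟩ := TwoSidedIdeal.mem_jacobson_iff.1 hx 1
  rw [TwoSidedIdeal.mem_bot, mul_one, sub_eq_zero] at hz
  exact ⟨z, by rw [mul_add, mul_one, add_comm, hz]⟩

theorem isUnit_one_add_of_mem_jacRad {R : Type*} [Ring R] {x : R} (hx : x ∈ jacRad R) :
    IsUnit (1 + x) := by
  obtain ⟨z, hz⟩ := exists_mul_one_add_eq_one_of_mem_jacRad hx
  -- `z = 1 - z * x` also has a left inverse, hence is a unit with inverse `1 + x`.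
  have hz' : 1 + -(z * x) = z := by
    rw [mul_add, mul_one] at hz
    rw [← sub_eq_add_neg, sub_eq_iff_eq_add, ← hz]
  obtain ⟨w, hw⟩ := exists_mul_one_add_eq_one_of_mem_jacRad
    (neg_mem ((jacRad R).mul_mem_left z x hx))
  rw [hz'] at hw
  have hwx : w = 1 + x := left_inv_eq_right_inv hw hz
  exact ⟨⟨1 + x, z, hwx ▸ hw, hz⟩, rfl⟩

theorem IsUnit.add_mem_jacRad {R : Type*} [Ring R] {u x : R} (hu : IsUnit u)
    (hx : x ∈ jacRad R) : IsUnit (u + x) := by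
  obtain ⟨v, rfl⟩ := hu
  have : (v : R) + x = v * (1 + ↑v⁻¹ * x) := by
    rw [mul_add, mul_one, ← mul_assoc, Units.mul_inv, one_mul]
  exact this ▸ v.isUnit.mul (isUnit_one_add_of_mem_jacRad ((jacRad R).mul_mem_left _ _ hx))

theorem IsMaxIndepSet.add_mem_of_mem_jacRad {R : Type*} [Ring R] {A : Set R}
    (hA : IsMaxIndepSet (unitaryCayley R) A) {a j : R} (ha : a ∈ A) (hj : j ∈ jacRad R) :
    a + j ∈ A := by
  refine hA.mem_of_forall_not_adj fun b hb ⟨hne, hunit⟩ => ?_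
  have hab : IsUnit (a - b) := by
    rw [show a - b = a + j - b + -j by abel]
    exact hunit.add_mem_jacRad (neg_mem hj)
  by_cases heq : a = b
  · subst heq
    have : Subsingleton R := subsingleton_of_zero_eq_one (isUnit_zero_iff.1 (by simpa using hab))
    exact hne (Subsingleton.elim _ _)
  · exact hA.1 ha hb heq ⟨heq, hab⟩

theorem stmt16_general (R : Type*) [Ring R] (A B : Set R)
    (hA : IsMaxIndepSet (unitaryCayley R) A)
    (hB : IsMaxIndepSet (unitaryCayley R) B) :
    (jacRad R : Set R).ncard ∣ (A ∩ B).ncard := by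
  set J := (TwoSidedIdeal.asIdeal (jacRad R)).toAddSubgroup
  have hclosed : A ∩ B + (J : Set R) = A ∩ B := by
    refine (Set.add_subset_iff.2 fun s hs j hj => ?_).antisymm
      (Set.subset_add_left _ J.zero_mem)
    exact ⟨hA.add_mem_of_mem_jacRad hs.1 hj, hB.add_mem_of_mem_jacRad hs.2 hj⟩
  have hcard := AddSubgroup.card_add_eq_card_addSubgroup_add_card_quotient J (A ∩ B)
  rw [hclosed] at hcard
  rw [← Nat.card_coe_set_eq, ← Nat.card_coe_set_eq, hcard]
  exact dvd_mul_right _ _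

theorem stmt16 (R : Type*) [Ring R] [Finite R] (A B : Set R)
    (hA : IsMaxIndepSet (unitaryCayley R) A)
    (hB : IsMaxIndepSet (unitaryCayley R) B) :
    (jacRad R : Set R).ncard ∣ (A ∩ B).ncard :=
  stmt16_general R A B hA hB
end
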